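/- The map p : Aut(X*) → (ℤ/2ℤ)^ℕ, where p(g)_n is the number of words v of length n at which g is active, taken modulo 2, is a group homomorphism, and it is continuous when Aut(X*) carries the topology of pointwise convergence and (ℤ/2ℤ)^ℕ the product topology of the discrete topologies. -/

import Mathlib

/-!  Common setup: the group `Aut(X*)` of automorphisms of the rooted binary tree,
the Grigorchuk generators `a, b_ω, c_ω, d_ω`, and the subgroups `G_ω`, `L_ω`. -/

/-- Finite words over `X = {0,1}`: vertices of the rooted binary tree. -/
abbrev Word := List Bool

/-- `Aut(X*)`: bijections of the set of words which preserve word length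
(hence fix the empty word) and preserve the prefix relation, as a subgroup of the
permutation group of `Word`. -/
def TreeAut : Subgroup (Equiv.Perm Word) where
  carrier := {g | (∀ w : Word, (g w).length = w.length) ∧
      ∀ u v : Word, u <+: v ↔ g u <+: g v}
  one_mem' := ⟨fun _ => rfl, fun _ _ => Iff.rfl⟩
  mul_mem' := by
    rintro g h ⟨hg1, hg2⟩ ⟨hh1, hh2⟩
    refine ⟨fun w => ?_, fun u v => ?_⟩
    · simpa using (hg1 (h w)).trans (hh1 w)
    · simpa using (hh2 u v).trans (hg2 (h u) (h v))
  inv_mem' := by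
    rintro g ⟨hg1, hg2⟩
    refine ⟨fun w => ?_, fun u v => ?_⟩
    · have := hg1 (g⁻¹ w)
      rw [show g (g⁻¹ w) = w from Equiv.apply_symm_apply g w] at this
      exact this.symm
    · have := (hg2 (g⁻¹ u) (g⁻¹ v)).symm
      simpa using this

/-- Application of a tree automorphism to a word. -/
def ap (g : ↥TreeAut) (w : Word) : Word := (g : Equiv.Perm Word) w

/-- The root permutation `a` (as a map): `a(0v) = 1v`, `a(1v) = 0v`. -/
def aFun : Word → Word
  | [] => []
  | x :: v => (!x) :: v

/-- The common recursive pattern of the maps `b_ω, c_ω, d_ω`: on `0v` act by the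
identity if `ω 0 = k` and by `a` otherwise, on `1v` recurse with the shifted sequence.
(`k = 2` gives `b`, `k = 1` gives `c`, `k = 0` gives `d`.) -/
def genFun (k : Fin 3) : (ℕ → Fin 3) → Word → Word
  | _, [] => []
  | ω, false :: v => false :: (if ω 0 = k then v else aFun v)
  | ω, true :: v => true :: genFun k (fun n => ω (n + 1)) v

lemma aFun_invol : Function.Involutive aFun := by
  intro w; cases w with
  | nil => rfl
  | cons x v => simp [aFun]

lemma aFun_length : ∀ w : Word, (aFun w).length = w.length := by
  intro w; cases w <;> simp [aFun]

lemma aFun_prefix : ∀ u v : Word, u <+: v → aFun u <+: aFun v := by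
  intro u v h
  cases u with
  | nil => simp [aFun]
  | cons x u' =>
    cases v with
    | nil => simp at h
    | cons y v' =>
      rw [List.cons_prefix_cons] at h
      obtain ⟨rfl, h2⟩ := h
      simpa [aFun, List.cons_prefix_cons] using h2

lemma genFun_length (k : Fin 3) : ∀ (w : Word) (ω : ℕ → Fin 3),
    (genFun k ω w).length = w.length
  | [], _ => rfl
  | false :: v, ω => by
    by_cases h : ω 0 = k <;> simp [genFun, h, aFun_length]
  | true :: v, ω => by
    simp [genFun, genFun_length k v]

lemma genFun_invol (k : Fin 3) : ∀ (w : Word) (ω : ℕ → Fin 3),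
    genFun k ω (genFun k ω w) = w
  | [], _ => rfl
  | false :: v, ω => by
    by_cases h : ω 0 = k <;> simp [genFun, h, aFun_invol v]
  | true :: v, ω => by
    simp [genFun, genFun_invol k v]

lemma genFun_prefix (k : Fin 3) : ∀ (u v : Word) (ω : ℕ → Fin 3),
    u <+: v → genFun k ω u <+: genFun k ω v
  | [], v, ω, _ => by simp [genFun]
  | x :: u', [], ω, h => by simp at h
  | x :: u', y :: v', ω, h => by
    rw [List.cons_prefix_cons] at h
    obtain ⟨rfl, h2⟩ := h
    cases x with
    | false =>
      by_cases h0 : ω 0 = k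
      · simpa [genFun, h0, List.cons_prefix_cons] using h2
      · simpa [genFun, h0, List.cons_prefix_cons] using aFun_prefix u' v' h2
    | true =>
      simpa [genFun, List.cons_prefix_cons] using genFun_prefix k u' v' _ h2

/-- Build an element of `Aut(X*)` from an involutive, length-preserving,
prefix-preserving map. -/
def mkAut (f : Word → Word) (hinv : Function.Involutive f)
    (hlen : ∀ w, (f w).length = w.length)
    (hpre : ∀ u v : Word, u <+: v → f u <+: f v) : ↥TreeAut :=
  ⟨hinv.toPerm, by
    refine ⟨fun w => ?_, fun u v => ⟨fun h => ?_, fun h => ?_⟩⟩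
    · simpa using hlen w
    · simpa using hpre u v h
    · have := hpre _ _ (by simpa using h)
      simpa [hinv u, hinv v] using this⟩

/-- The automorphism `a`. -/
def aAut : ↥TreeAut := mkAut aFun aFun_invol aFun_length aFun_prefix

/-- The automorphism `b_ω`. -/
def bAut (ω : ℕ → Fin 3) : ↥TreeAut :=
  mkAut (genFun 2 ω) (fun w => genFun_invol 2 w ω) (fun w => genFun_length 2 w ω)
    (fun u v h => genFun_prefix 2 u v ω h)

/-- The automorphism `c_ω`. -/
def cAut (ω : ℕ → Fin 3) : ↥TreeAut :=
  mkAut (genFun 1 ω) (fun w => genFun_invol 1 w ω) (fun w => genFun_length 1 w ω)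
    (fun u v h => genFun_prefix 1 u v ω h)

/-- The automorphism `d_ω`. -/
def dAut (ω : ℕ → Fin 3) : ↥TreeAut :=
  mkAut (genFun 0 ω) (fun w => genFun_invol 0 w ω) (fun w => genFun_length 0 w ω)
    (fun u v h => genFun_prefix 0 u v ω h)

/-- `G_ω = ⟨a, b_ω, c_ω, d_ω⟩`. -/
def Ggrp (ω : ℕ → Fin 3) : Subgroup ↥TreeAut :=
  Subgroup.closure {aAut, bAut ω, cAut ω, dAut ω}

/-- `L_ω = ⟨a b_ω, d_ω⟩`. -/
def Lgrp (ω : ℕ → Fin 3) : Subgroup ↥TreeAut :=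
  Subgroup.closure {aAut * bAut ω, dAut ω}

/-- The `n`-fold shift `σⁿω`. -/
def shift (n : ℕ) (ω : ℕ → Fin 3) : ℕ → Fin 3 := fun m => ω (m + n)

/-- `Ω_∞`: sequences in which each of `0, 1, 2` occurs infinitely often. -/
def OmegaInf : Set (ℕ → Fin 3) := {ω | ∀ k : Fin 3, ∀ N : ℕ, ∃ n, N ≤ n ∧ ω n = k}

/-- `g` fixes every word of length `n`. -/
def fixesLevel (g : ↥TreeAut) (n : ℕ) : Prop := ∀ w : Word, w.length = n → ap g w = w

/-- The subgroup of all tree automorphisms acting trivially outside the subtree `uX*`. -/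
def ristSubgroup (u : Word) : Subgroup ↥TreeAut where
  carrier := {g | ∀ w : Word, ¬ u <+: w → ap g w = w}
  one_mem' := by intro w _; rfl
  mul_mem' := by
    intro g h hg hh w hw
    have e1 : ap g w = w := hg w hw
    have e2 : ap h w = w := hh w hw
    simp only [ap] at e1 e2
    show (g : Equiv.Perm Word) ((h : Equiv.Perm Word) w) = w
    rw [e2, e1]
  inv_mem' := by
    intro g hg w hw
    have h1' : ap g w = w := hg w hw
    have h1 : (g : Equiv.Perm Word) w = w := h1'
    show ((g : Equiv.Perm Word))⁻¹ w = w
    conv_lhs => rw [← h1]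
    simp

/-- The subgroup of all tree automorphisms fixing every word of length `n`
(the `n`-th level stabilizer in `Aut(X*)`). -/
def levelStab (n : ℕ) : Subgroup ↥TreeAut where
  carrier := {g | fixesLevel g n}
  one_mem' := by intro w _; rfl
  mul_mem' := by
    intro g h hg hh w hw
    have e1 : ap g w = w := hg w hw
    have e2 : ap h w = w := hh w hw
    simp only [ap] at e1 e2
    show (g : Equiv.Perm Word) ((h : Equiv.Perm Word) w) = w
    rw [e2, e1]
  inv_mem' := by
    intro g hg w hw
    have h1' : ap g w = w := hg w hw
    have h1 : (g : Equiv.Perm Word) w = w := h1'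
    show ((g : Equiv.Perm Word))⁻¹ w = w
    conv_lhs => rw [← h1]
    simp

/-- The rigid level stabilizer `Rist_G(n)`: the subgroup generated by the rigid vertex
stabilizers `Rist_G(u) = G ⊓ ristSubgroup u` over all words `u` of length `n`. -/
def ristLevel (G : Subgroup ↥TreeAut) (n : ℕ) : Subgroup ↥TreeAut :=
  ⨆ u ∈ {u : Word | u.length = n}, G ⊓ ristSubgroup u

/-- `G` acts transitively on each level of the tree. -/
def LevelTransitive (G : Subgroup ↥TreeAut) : Prop :=
  ∀ u v : Word, u.length = v.length → ∃ g ∈ G, ap g u = v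

/-- A set of tree automorphisms acts level transitively on the subtree `vX*`. -/
def LevelTransitiveOn (S : Set ↥TreeAut) (v : Word) : Prop :=
  ∀ u₁ u₂ : Word, u₁.length = u₂.length → ∃ g ∈ S, ap g (v ++ u₁) = v ++ u₂

/-- `L_{n,ω}`: `L_{0,ω} = L_ω` and `L_{n,ω}` is generated by the squares of
elements of `L_{n-1,ω}`. -/
def Lsq (ω : ℕ → Fin 3) : ℕ → Subgroup ↥TreeAut
  | 0 => Lgrp ω
  | n + 1 => Subgroup.closure {x | ∃ y ∈ Lsq ω n, x = y * y}

/-- `g` is active at the word `v`: the section `g_v` acts nontrivially on the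
one-letter words. -/
def IsActive (g : ↥TreeAut) (v : Word) : Prop :=
  ap g (v ++ [false]) ≠ ap g v ++ [false]

open scoped Classical in
/-- `p(g)_n`: the number of words of length `n` at which `g` is active, mod 2
(words of length `n` are enumerated as `List.ofFn f` for `f : Fin n → Bool`). -/
noncomputable def pMap (g : ↥TreeAut) (n : ℕ) : ZMod 2 :=
  (((Finset.univ : Finset (Fin n → Bool)).filter
    (fun f => IsActive g (List.ofFn f))).card : ZMod 2)

/-! Topology: `Aut(X*)` with the topology of pointwise convergence. -/

instance : TopologicalSpace Word := ⊥
instance : DiscreteTopology Word := ⟨rfl⟩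
instance : TopologicalSpace (ZMod 2) := ⊥
instance : DiscreteTopology (ZMod 2) := ⟨rfl⟩

/-- The topology of pointwise convergence on permutations of the (discrete) set of
words. -/
instance : TopologicalSpace (Equiv.Perm Word) :=
  TopologicalSpace.induced (fun g : Equiv.Perm Word => (g : Word → Word)) inferInstance

lemma continuous_evalWord (w : Word) :
    Continuous fun g : Equiv.Perm Word => g w :=
  (continuous_apply w).comp continuous_induced_dom

lemma isOpen_evalWord (w y : Word) : IsOpen {g : Equiv.Perm Word | g w = y} :=
  (continuous_evalWord w).isOpen_preimage {y} (isOpen_discrete _)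

instance : IsTopologicalGroup (Equiv.Perm Word) where
  continuous_mul := by
    rw [continuous_induced_rng]
    apply continuous_pi
    intro w
    rw [continuous_discrete_rng]
    intro y
    have key : {p : Equiv.Perm Word × Equiv.Perm Word | p.1 (p.2 w) = y} =
        ⋃ z : Word, {g : Equiv.Perm Word | g z = y} ×ˢ {h : Equiv.Perm Word | h w = z} := by
      ext p
      simp only [Set.mem_iUnion, Set.mem_prod, Set.mem_setOf_eq]
      constructor
      · intro h; exact ⟨p.2 w, h, rfl⟩
      · rintro ⟨z, h1, h2⟩; simp [h2, h1]
    show IsOpen {p : Equiv.Perm Word × Equiv.Perm Word | p.1 (p.2 w) = y}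
    rw [key]
    exact isOpen_iUnion fun z => (isOpen_evalWord z y).prod (isOpen_evalWord w z)
  continuous_inv := by
    rw [continuous_induced_rng]
    apply continuous_pi
    intro w
    rw [continuous_discrete_rng]
    intro y
    have key : {g : Equiv.Perm Word | g⁻¹ w = y} = {g : Equiv.Perm Word | g y = w} := by
      ext g
      simp only [Set.mem_setOf_eq]
      constructor
      · intro h; rw [← h]; simp
      · intro h; rw [← h]; simp
    show IsOpen {g : Equiv.Perm Word | g⁻¹ w = y}
    rw [key]
    exact isOpen_evalWord y w

/-! The mod-2 count is additive because activity is a cocycle: writing `g_v` for the section,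
`(gh)_v = g_{h(v)} h_v`, so `gh` is active at `v` exactly when one of `h` at `v` and `g` at `h(v)`
is, and `h` permutes each level. Continuity holds because `p(g)_n` only depends on the values of
`g` on the finitely many words of length `n` and `n + 1`. -/

open Finset

instance (g : ↥TreeAut) (v : Word) : Decidable (IsActive g v) :=
  inferInstanceAs (Decidable (_ ≠ _))

lemma ap_length (g : ↥TreeAut) (w : Word) : (ap g w).length = w.length := g.2.1 w

lemma ap_isPrefix (g : ↥TreeAut) {u v : Word} (h : u <+: v) : ap g u <+: ap g v :=
  (g.2.2 u v).1 h

lemma ap_mul (g h : ↥TreeAut) (w : Word) : ap (g * h) w = ap g (ap h w) := rfl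

lemma ap_injective (g : ↥TreeAut) : Function.Injective (ap g) :=
  (g : Equiv.Perm Word).injective

lemma exists_ap_append_singleton (g : ↥TreeAut) (v : Word) (x : Bool) :
    ∃ y : Bool, ap g (v ++ [x]) = ap g v ++ [y] := by
  obtain ⟨t, ht⟩ := ap_isPrefix g (List.prefix_append v [x])
  have hlen : t.length = 1 := by
    simpa [← ht, ap_length] using ap_length g (v ++ [x])
  obtain ⟨y, rfl⟩ := List.length_eq_one_iff.1 hlen
  exact ⟨y, ht.symm⟩

lemma ap_append_singleton (g : ↥TreeAut) (v : Word) (x : Bool) :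
    ap g (v ++ [x]) = ap g v ++ [xor x (decide (IsActive g v))] := by
  obtain ⟨y₀, h₀⟩ := exists_ap_append_singleton g v false
  obtain ⟨y₁, h₁⟩ := exists_ap_append_singleton g v true
  have hactive : decide (IsActive g v) = y₀ := by
    cases y₀ <;> simp [IsActive, h₀]
  have hne : y₁ ≠ y₀ := by
    rintro rfl
    simpa using ap_injective g (h₁.trans h₀.symm)
  cases x
  · simp [h₀, hactive]
  · cases y₀ <;> cases y₁ <;> simp_all

lemma isActive_mul_iff (g h : ↥TreeAut) (v : Word) :
    IsActive (g * h) v ↔ Xor (IsActive h v) (IsActive g (ap h v)) := by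
  change ap (g * h) (v ++ [false]) ≠ ap (g * h) v ++ [false] ↔ _
  rw [ap_mul, ap_mul, ap_append_singleton h, ap_append_singleton g]
  by_cases hh : IsActive h v <;> by_cases hg : IsActive g (ap h v) <;> simp [hh, hg, Xor]

def levelPerm (g : ↥TreeAut) (n : ℕ) : Equiv.Perm (Fin n → Bool) :=
  ((Equiv.vectorEquivFin Bool n).symm.trans
    ((g : Equiv.Perm Word).subtypeEquiv fun w => by rw [← ap_length g w]; rfl)).trans
    (Equiv.vectorEquivFin Bool n)

lemma ofFn_levelPerm (g : ↥TreeAut) (n : ℕ) (f : Fin n → Bool) :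
    List.ofFn (levelPerm g n f) = ap g (List.ofFn f) := by
  rw [← List.Vector.toList_ofFn]
  erw [List.Vector.ofFn_get]
  exact congrArg (ap g) (List.Vector.toList_ofFn f)

lemma Finset.natCast_card_filter_xor {α : Type*} (s : Finset α) (p q : α → Prop)
    [DecidablePred p] [DecidablePred q] :
    (#{a ∈ s | Xor (p a) (q a)} : ZMod 2) = #{a ∈ s | p a} + #{a ∈ s | q a} := by
  simp only [natCast_card_filter, ← sum_add_distrib]
  refine sum_congr rfl fun a _ => ?_
  by_cases hp : p a <;> by_cases hq : q a <;> simp [hp, hq, Xor]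
  decide

lemma Finset.card_filter_univ_comp_equiv {α β : Type*} [Fintype α] [Fintype β] (e : α ≃ β)
    (p : β → Prop) [DecidablePred p] : #{a | p (e a)} = #{b | p b} :=
  card_equiv e (by simp)

lemma pMap_apply (g : ↥TreeAut) (n : ℕ) :
    pMap g n = #{f : Fin n → Bool | IsActive g (List.ofFn f)} := by
  unfold pMap
  congr

lemma pMap_mul (g h : ↥TreeAut) : pMap (g * h) = pMap g + pMap h := by
  funext n
  calc pMap (g * h) n
      = #{f | Xor (IsActive h (List.ofFn f)) (IsActive g (List.ofFn (levelPerm h n f)))} := by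
        simp only [pMap_apply, isActive_mul_iff, ofFn_levelPerm]
    _ = #{f | IsActive h (List.ofFn f)} + #{f | IsActive g (List.ofFn (levelPerm h n f))} :=
        natCast_card_filter_xor _ _ _
    _ = pMap g n + pMap h n := by
        rw [card_filter_univ_comp_equiv (levelPerm h n) (fun f => IsActive g (List.ofFn f)),
          pMap_apply, pMap_apply, add_comm]

lemma continuous_ap (w : Word) : Continuous fun g : ↥TreeAut => ap g w :=
  (continuous_evalWord w).comp continuous_subtype_val

lemma continuous_pMap : Continuous pMap := by
  refine continuous_pi fun n => ?_
  let restrict (g : ↥TreeAut) (f : Fin n → Bool) : Word × Word :=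
    (ap g (List.ofFn f), ap g (List.ofFn f ++ [false]))
  have hrestrict : Continuous restrict :=
    continuous_pi fun f => (continuous_ap _).prodMk (continuous_ap _)
  refine ((continuous_of_discreteTopology (f := fun r : (Fin n → Bool) → Word × Word =>
    (#{f | (r f).2 ≠ (r f).1 ++ [false]} : ZMod 2))).comp hrestrict).congr fun g => ?_
  exact (pMap_apply g n).symm

/-- the map `p : Aut(X*) → (ℤ/2ℤ)^ℕ` counting (mod 2) the active words
on each level is a group homomorphism and is continuous for the topology of pointwise
convergence on `Aut(X*)` and the product of discrete topologies on `(ℤ/2ℤ)^ℕ`. -/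
theorem statement10 :
    (∀ g h : ↥TreeAut, pMap (g * h) = pMap g + pMap h) ∧
      Continuous (pMap : ↥TreeAut → ℕ → ZMod 2) :=
  ⟨pMap_mul, continuous_pMap⟩
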